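/- Assume p(s) > 0 for every s ∈ S, let N = |S|, and let σ : {1,…,N} → S be a bijection with n(σ(k)) ≤ n(σ(k+1)) for all 1 ≤ k < N. Then for every valid deterministic padding scheme f there exist m ≥ 1 and indices 0 = j₀ < j₁ < ⋯ < j_m = N such that for each r ∈ {1,…,m} one has n(σ(j_r)) ≤ c·n(σ(j_{r−1}+1)), and the deterministic padding scheme g defined by g(σ(k)) = n(σ(j_r)) for all k with j_{r−1} < k ≤ j_r is valid and satisfies H(g) ≤ H(f). -/

import Mathlib

/-- `η(t) = -t·log₂ t` (note `Real.logb 2 0 = 0`, so `η 0 = 0`). -/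
noncomputable def eta (t : ℝ) : ℝ := -(t * Real.logb 2 t)

/-- A deterministic padding scheme `f` is valid if `n s ≤ f s ≤ c·n s` for all `s`. -/
def ValidDet {S : Type*} (n : S → ℕ) (c : ℝ) (f : S → ℕ) : Prop :=
  ∀ s, n s ≤ f s ∧ (f s : ℝ) ≤ c * (n s : ℝ)

/-- Padded-size entropy `H(f) = Σ_{y ∈ f(S)} η(Σ_{s : f s = y} p s)`. -/
noncomputable def Hent {S : Type*} [Fintype S] (p : S → ℝ) (f : S → ℕ) : ℝ :=
  ∑ y ∈ Finset.univ.image f, eta (∑ s ∈ Finset.univ.filter (fun s => f s = y), p s)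

open Finset

lemma eta_eq (t : ℝ) : eta t = Real.negMulLog t / Real.log 2 := by
  simp [eta, Real.negMulLog, Real.logb, div_eq_mul_inv]; ring

@[simp] lemma eta_zero : eta 0 = 0 := by simp [eta]

lemma eta_subadd {a b : ℝ} (ha : 0 ≤ a) (hb : 0 ≤ b) : eta (a + b) ≤ eta a + eta b := by
  rcases eq_or_lt_of_le ha with h | h
  · simp [← h]
  rcases eq_or_lt_of_le hb with h' | h'
  · simp [← h']
  have h2 : (0:ℝ) < Real.log 2 := Real.log_pos (by norm_num)
  rw [eta_eq, eta_eq, eta_eq, ← add_div, div_le_div_iff_of_pos_right h2]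
  have la : Real.log a ≤ Real.log (a + b) := Real.log_le_log h (by linarith)
  have lb : Real.log b ≤ Real.log (a + b) := Real.log_le_log h' (by linarith)
  simp only [Real.negMulLog, neg_mul]
  nlinarith

lemma eta_transfer {x a b : ℝ} (hx : 0 ≤ x) (hxa : x ≤ a) (hb : 0 ≤ b) (h : a ≤ b + x) :
    eta (a - x) + eta (b + x) ≤ eta a + eta b := by
  have h2 : (0:ℝ) < Real.log 2 := Real.log_pos (by norm_num)
  rw [eta_eq, eta_eq, eta_eq, eta_eq, ← add_div, ← add_div,
    div_le_div_iff_of_pos_right h2]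
  set lo := a - x with hlo
  set hi := b + x with hhi
  have hlo0 : 0 ≤ lo := by simp [hlo]; linarith
  have hhi0 : 0 ≤ hi := by simp [hhi]; linarith
  have hlohi : lo ≤ hi := by simp [hlo, hhi]; linarith
  rcases eq_or_lt_of_le hlohi with he | hlt
  · have hx0 : x = 0 := by
      have h1 : a - x = b + x := by rw [← hlo, ← hhi, he]
      have h2' : a ≤ b + x := h
      have h3 : a - x ≤ a := by linarith
      -- a - x = b + x ≥ a, and a - x ≤ a so a - x = a, x = 0
      linarith
    have hab : a = b := by
      have h1 : a - x = b + x := by rw [← hlo, ← hhi, he]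
      linarith
    have e1 : lo = a := by rw [hlo, hx0]; ring
    have e2 : hi = b := by rw [hhi, hx0]; ring
    rw [e1, e2]
  · set θ : ℝ := (a - lo) / (hi - lo) with hθdef
    have hd : 0 < hi - lo := by linarith
    have hθ0 : 0 ≤ θ := by
      apply div_nonneg _ (by linarith)
      simp [hlo]; linarith
    have hθ1 : θ ≤ 1 := by rw [hθdef, div_le_one hd]; linarith
    have hmul : θ * (hi - lo) = a - lo := by
      rw [hθdef, div_mul_cancel₀]; exact ne_of_gt hd
    have haθ : a = (1 - θ) * lo + θ * hi := by nlinarith [hmul]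
    have hbθ : b = θ * lo + (1 - θ) * hi := by
      have : lo + hi = a + b := by rw [hlo, hhi]; ring
      nlinarith [hmul]
    have C := Real.concaveOn_negMulLog
    have c1 := C.2 (Set.mem_Ici.2 hlo0) (Set.mem_Ici.2 hhi0) (by linarith : (0:ℝ) ≤ 1 - θ) hθ0 (by ring)
    have c2 := C.2 (Set.mem_Ici.2 hlo0) (Set.mem_Ici.2 hhi0) hθ0 (by linarith : (0:ℝ) ≤ 1 - θ) (by ring)
    rw [smul_eq_mul, smul_eq_mul, smul_eq_mul, smul_eq_mul] at c1 c2
    rw [← haθ] at c1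
    rw [show θ * lo + (1 - θ) * hi = b from hbθ.symm] at c2
    linarith


noncomputable def Hp (w : ℕ → ℝ) (v : ℕ → ℕ) (M : ℕ) : ℝ :=
  ∑ y ∈ (Finset.Icc 1 M).image v,
    eta (∑ k ∈ (Finset.Icc 1 M).filter (fun k => v k = y), w k)

lemma Hp_superset (w : ℕ → ℝ) (v : ℕ → ℕ) (M : ℕ) {Y : Finset ℕ}
    (hY : (Finset.Icc 1 M).image v ⊆ Y) :
    Hp w v M = ∑ y ∈ Y, eta (∑ k ∈ (Finset.Icc 1 M).filter (fun k => v k = y), w k) := by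
  apply Finset.sum_subset hY
  intro y _ hy
  have : (Finset.Icc 1 M).filter (fun k => v k = y) = ∅ := by
    apply Finset.filter_eq_empty_iff.2
    intro k hk hvk
    exact hy (Finset.mem_image.2 ⟨k, hk, hvk⟩)
  rw [this]; simp

lemma eta_sum_le {α : Type*} (t : Finset α) (q : α → ℝ) (hq : ∀ a ∈ t, 0 ≤ q a) :
    eta (∑ a ∈ t, q a) ≤ ∑ a ∈ t, eta (q a) := by
  classical
  induction t using Finset.induction_on with
  | empty => simp
  | @insert a t ha ih =>
    rw [Finset.sum_insert ha, Finset.sum_insert ha]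
    calc eta (q a + ∑ b ∈ t, q b) ≤ eta (q a) + eta (∑ b ∈ t, q b) :=
          eta_subadd (hq a (Finset.mem_insert_self a t))
            (Finset.sum_nonneg fun b hb => hq b (Finset.mem_insert_of_mem hb))
      _ ≤ eta (q a) + ∑ b ∈ t, eta (q b) := by
          have := ih (fun b hb => hq b (Finset.mem_insert_of_mem hb))
          linarith

lemma sum_eta_image_le {α : Type*} [DecidableEq α] (s : Finset α) (valf : α → ℕ) (q : α → ℝ)
    (hq : ∀ a ∈ s, 0 ≤ q a) :
    ∑ y ∈ s.image valf, eta (∑ a ∈ s.filter (fun a => valf a = y), q a)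
      ≤ ∑ a ∈ s, eta (q a) := by
  rw [← Finset.sum_fiberwise_of_maps_to (g := valf) (fun a ha => Finset.mem_image_of_mem _ ha)
    (fun a => eta (q a))]
  apply Finset.sum_le_sum
  intro y _
  exact eta_sum_le _ _ (fun a ha => hq a (Finset.mem_filter.1 ha).1)

lemma sum_blocks (m : ℕ) (j : ℕ → ℕ) (hj : ∀ r r', r ≤ r' → r' ≤ m → j r ≤ j r')
    (F : ℕ → ℝ) :
    ∑ r ∈ Finset.range m, ∑ k ∈ Finset.Ioc (j r) (j (r + 1)), F k
      = ∑ k ∈ Finset.Ioc (j 0) (j m), F k := by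
  induction m with
  | zero => simp
  | succ m ih =>
    have hj' : ∀ r r', r ≤ r' → r' ≤ m → j r ≤ j r' := fun r r' h h' => hj r r' h (h'.trans (Nat.le_succ m))
    rw [Finset.sum_range_succ, ih hj', Finset.sum_Ioc_consecutive F (hj 0 m (Nat.zero_le _) (Nat.le_succ m)) (hj m (m+1) (Nat.le_succ m) le_rfl)]

lemma sum_split_two {Y : Finset ℕ} {a b : ℕ} (ha : a ∈ Y) (hb : b ∈ Y) (hab : b ≠ a)
    (F : ℕ → ℝ) :
    ∑ y ∈ Y, F y = F a + F b + ∑ y ∈ (Y.erase a).erase b, F y := by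
  rw [← Finset.add_sum_erase _ F ha, ← Finset.add_sum_erase _ F (Finset.mem_erase.2 ⟨hab, hb⟩)]
  ring


lemma jmono {m : ℕ} {j : ℕ → ℕ} (h : ∀ r < m, j r < j (r + 1)) :
    ∀ r r', r ≤ r' → r' ≤ m → j r ≤ j r' := by
  intro r r' hrr' hr'm
  induction r' with
  | zero =>
    have : r = 0 := by omega
    rw [this]
  | succ nn ih =>
    rcases Nat.lt_or_ge r (nn + 1) with hlt | hge
    · have h1 : j r ≤ j nn := ih (by omega) (by omega)
      have h2 : j nn < j (nn + 1) := h nn (by omega)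
      omega
    · have : r = nn + 1 := by omega
      rw [this]

lemma core (N : ℕ) (ν : ℕ → ℕ) (w : ℕ → ℝ) (c : ℝ)
    (hν : ∀ i j, 1 ≤ i → i ≤ j → j ≤ N → ν i ≤ ν j)
    (hw : ∀ k, 0 ≤ w k) (hc : 1 ≤ c) :
    ∀ μ : ℕ, ∀ M : ℕ, ∀ v : ℕ → ℕ, M ≤ N →
      (∀ k k', k ∈ Finset.Icc 1 M → k' ∈ Finset.Icc 1 M → v k = v k' →
        (ν k : ℝ) ≤ c * ν k') →
      ((Finset.Icc 1 M).image v).card * (N + 1)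
        + ((Finset.Icc 1 M).filter (fun k => v k ≠ v M)).sup id ≤ μ →
      ∃ (m : ℕ) (j : ℕ → ℕ), j 0 = 0 ∧ j m = M ∧ (∀ r < m, j r < j (r + 1)) ∧
        (∀ r, 1 ≤ r → r ≤ m → (ν (j r) : ℝ) ≤ c * ν (j (r - 1) + 1)) ∧
        (∑ r ∈ Finset.range m, eta (∑ k ∈ Finset.Ioc (j r) (j (r + 1)), w k)) ≤ Hp w v M := by
  intro μ
  induction μ using Nat.strong_induction_on with
  | _ μ IH =>
  intro M v hMN hcls hmeas
  rcases Nat.eq_zero_or_pos M with hM0 | hM1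
  · subst hM0
    refine ⟨0, fun _ => 0, rfl, rfl, by omega, by omega, ?_⟩
    simp [Hp]
  have hMmem : M ∈ Finset.Icc 1 M := Finset.mem_Icc.2 ⟨hM1, le_rfl⟩
  by_cases hD : ((Finset.Icc 1 M).filter (fun k => v k ≠ v M)).Nonempty
  case neg =>
    -- single class
    have hall : ∀ k ∈ Finset.Icc 1 M, v k = v M := by
      intro k hk
      by_contra hne
      exact hD ⟨k, Finset.mem_filter.2 ⟨hk, hne⟩⟩
    refine ⟨1, fun r => if r = 0 then 0 else M, by simp, by simp, ?_, ?_, ?_⟩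
    · intro r hr
      have : r = 0 := by omega
      simp [this, hM1]
    · intro r hr1 hr2
      have : r = 1 := by omega
      subst this
      simp only [if_neg one_ne_zero, if_pos rfl]
      have h1 : (1:ℕ) ∈ Finset.Icc 1 M := Finset.mem_Icc.2 ⟨le_rfl, hM1⟩
      exact hcls M 1 hMmem h1 (hall 1 h1).symm
    · have himg : (Finset.Icc 1 M).image v ⊆ {v M} := by
        intro y hy
        obtain ⟨k, hk, hvk⟩ := Finset.mem_image.1 hy
        simp [← hvk, hall k hk]
      rw [Hp_superset w v M himg]
      have hIoc : Finset.Ioc 0 M = Finset.Icc 1 M := by ext k; simp [Finset.mem_Ioc, Finset.mem_Icc]; omega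
      have hfil : (Finset.Icc 1 M).filter (fun k => v k = v M) = Finset.Icc 1 M :=
        Finset.filter_true_of_mem hall
      simp only [Finset.sum_singleton, Finset.sum_range_succ, Finset.sum_range_zero,
        if_pos rfl, if_neg one_ne_zero, zero_add, hIoc, hfil]
      exact le_refl _
  case pos =>
    set Dd := (Finset.Icc 1 M).filter (fun k => v k ≠ v M) with hDd
    set b := Dd.max' hD with hbdef
    have hbD : b ∈ Dd := Finset.max'_mem _ hD
    have hbIcc : b ∈ Finset.Icc 1 M := (Finset.mem_filter.1 hbD).1
    have hvb : v b ≠ v M := (Finset.mem_filter.1 hbD).2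
    have hb1 : 1 ≤ b := (Finset.mem_Icc.1 hbIcc).1
    have hbM : b < M := by
      rcases Nat.lt_or_ge b M with h | h
      · exact h
      · exfalso; apply hvb
        have : b = M := le_antisymm (Finset.mem_Icc.1 hbIcc).2 h
        rw [this]
    have hle : ∀ k ∈ Dd, k ≤ b := fun k hk => Finset.le_max' _ k hk
    have htop : ∀ k, b < k → k ≤ M → v k = v M := by
      intro k hk1 hk2
      by_contra hne
      have : k ∈ Dd := Finset.mem_filter.2 ⟨Finset.mem_Icc.2 ⟨by omega, hk2⟩, hne⟩
      have := hle k this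
      omega
    set A := (Finset.Icc 1 M).filter (fun k => v k = v M) with hAdef
    have hMA : M ∈ A := Finset.mem_filter.2 ⟨hMmem, rfl⟩
    set minA := A.min' ⟨M, hMA⟩ with hminAdef
    have hminA : minA ∈ A := Finset.min'_mem _ _
    have hminA1 : 1 ≤ minA := (Finset.mem_Icc.1 (Finset.mem_filter.1 hminA).1).1
    have hminAM : minA ≤ M := (Finset.mem_Icc.1 (Finset.mem_filter.1 hminA).1).2
    have hvminA : v minA = v M := (Finset.mem_filter.1 hminA).2
    have hAmin : ∀ k ∈ A, minA ≤ k := fun k hk => Finset.min'_le _ k hk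
    set qA := ∑ k ∈ A, w k with hqAdef
    set B := (Finset.Icc 1 M).filter (fun k => v k = v b) with hBdef
    have hbB : b ∈ B := Finset.mem_filter.2 ⟨hbIcc, rfl⟩
    have hBsub : ∀ k ∈ B, k ≤ b := by
      intro k hk
      apply hle
      obtain ⟨hk1, hk2⟩ := Finset.mem_filter.1 hk
      exact Finset.mem_filter.2 ⟨hk1, by rw [hk2]; exact hvb⟩
    set qB := ∑ k ∈ B, w k with hqBdef
    set Alow := (Finset.Icc 1 b).filter (fun k => v k = v M) with hAlowdef
    set x := ∑ k ∈ Alow, w k with hxdef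
    have hBb : (Finset.Icc 1 b).filter (fun k => v k = v b) = B := by
      ext k
      simp only [Finset.mem_filter, Finset.mem_Icc, hBdef]
      constructor
      · rintro ⟨⟨h1, h2⟩, h3⟩; exact ⟨⟨h1, by omega⟩, h3⟩
      · rintro ⟨⟨h1, h2⟩, h3⟩
        refine ⟨⟨h1, ?_⟩, h3⟩
        exact hBsub k (Finset.mem_filter.2 ⟨Finset.mem_Icc.2 ⟨h1, h2⟩, h3⟩)
    have hAsplit : A = Alow ∪ Finset.Ioc b M := by
      ext k
      simp only [hAdef, hAlowdef, Finset.mem_filter, Finset.mem_Icc, Finset.mem_union,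
        Finset.mem_Ioc]
      constructor
      · rintro ⟨⟨h1, h2⟩, h3⟩
        rcases le_or_gt k b with h | h
        · exact Or.inl ⟨⟨h1, h⟩, h3⟩
        · exact Or.inr ⟨h, h2⟩
      · rintro (⟨⟨h1, h2⟩, h3⟩ | ⟨h1, h2⟩)
        · exact ⟨⟨h1, by omega⟩, h3⟩
        · exact ⟨⟨by omega, h2⟩, htop k h1 h2⟩
    have hdisj : Disjoint Alow (Finset.Ioc b M) := by
      rw [Finset.disjoint_left]
      intro k hk hk'
      have h1 := (Finset.mem_Icc.1 (Finset.mem_filter.1 hk).1).2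
      have h2 := (Finset.mem_Ioc.1 hk').1
      omega
    have hqA : qA = x + ∑ k ∈ Finset.Ioc b M, w k := by
      rw [hqAdef, hAsplit, Finset.sum_union hdisj]
    have hx0 : 0 ≤ x := Finset.sum_nonneg fun k _ => hw k
    have hqB0 : 0 ≤ qB := Finset.sum_nonneg fun k _ => hw k
    have hIocpos : 0 ≤ ∑ k ∈ Finset.Ioc b M, w k := Finset.sum_nonneg fun k _ => hw k
    have hxqA : x ≤ qA := by rw [hqA]; linarith
    have hcard1 : 1 ≤ ((Finset.Icc 1 M).image v).card := by
      apply Finset.card_pos.2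
      exact ⟨v M, Finset.mem_image_of_mem v hMmem⟩
    by_cases hOK : qA ≤ qB + x ∨ b < minA
    · -- prefix path: top block (b, M]
      set v' : ℕ → ℕ := fun k => if 1 ≤ k ∧ k ≤ b ∧ v k = v M then v b else v k with hv'def
      have hv'yes : ∀ k, 1 ≤ k → k ≤ b → v k = v M → v' k = v b := by
        intro k h1 h2 h3; simp only [hv'def]; rw [if_pos ⟨h1, h2, h3⟩]
      have hv'no : ∀ k, v k ≠ v M → v' k = v k := by
        intro k h; simp only [hv'def]; rw [if_neg (fun hctr => h hctr.2.2)]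
      set Y := (Finset.Icc 1 M).image v with hYdef
      have hvMY : v M ∈ Y := Finset.mem_image_of_mem v hMmem
      have hvbY : v b ∈ Y := Finset.mem_image_of_mem v hbIcc
      have himg' : (Finset.Icc 1 b).image v' ⊆ Y.erase (v M) := by
        intro y hy
        obtain ⟨k, hk, hvk⟩ := Finset.mem_image.1 hy
        obtain ⟨hk1, hk2⟩ := Finset.mem_Icc.1 hk
        by_cases hkM : v k = v M
        · rw [hv'yes k hk1 hk2 hkM] at hvk
          exact Finset.mem_erase.2 ⟨by rw [← hvk]; exact hvb, by rw [← hvk]; exact hvbY⟩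
        · rw [hv'no k hkM] at hvk
          refine Finset.mem_erase.2 ⟨by rw [← hvk]; exact hkM, ?_⟩
          rw [← hvk]
          exact Finset.mem_image_of_mem v (Finset.mem_Icc.2 ⟨hk1, by omega⟩)
      -- class condition for v' on [1, b]
      have hcls' : ∀ k k', k ∈ Finset.Icc 1 b → k' ∈ Finset.Icc 1 b → v' k = v' k' →
          (ν k : ℝ) ≤ c * ν k' := by
        intro k k' hk hk' heq
        obtain ⟨hk1, hk2⟩ := Finset.mem_Icc.1 hk
        obtain ⟨hk'1, hk'2⟩ := Finset.mem_Icc.1 hk'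
        have hkM' : k ∈ Finset.Icc 1 M := Finset.mem_Icc.2 ⟨hk1, by omega⟩
        have hk'M' : k' ∈ Finset.Icc 1 M := Finset.mem_Icc.2 ⟨hk'1, by omega⟩
        by_cases h1 : v k = v M <;> by_cases h2 : v k' = v M
        · exact hcls k k' hkM' hk'M' (h1.trans h2.symm)
        · rw [hv'yes k hk1 hk2 h1, hv'no k' h2] at heq
          calc (ν k : ℝ) ≤ (ν b : ℝ) := Nat.cast_le.2 (hν k b hk1 hk2 (by omega))
            _ ≤ c * ν k' := hcls b k' hbIcc hk'M' heq
        · rw [hv'no k h1, hv'yes k' hk'1 hk'2 h2] at heq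
          calc (ν k : ℝ) ≤ (ν M : ℝ) := Nat.cast_le.2 (hν k M hk1 (by omega) hMN)
            _ ≤ c * ν k' := hcls M k' hMmem hk'M' h2.symm
        · rw [hv'no k h1, hv'no k' h2] at heq
          exact hcls k k' hkM' hk'M' heq
      -- measure decreases
      set measure' := ((Finset.Icc 1 b).image v').card * (N + 1)
        + ((Finset.Icc 1 b).filter (fun k => v' k ≠ v' b)).sup id with hmeas'def
      have hcard' : ((Finset.Icc 1 b).image v').card + 1 ≤ Y.card := by
        have h1 : ((Finset.Icc 1 b).image v').card ≤ (Y.erase (v M)).card :=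
          Finset.card_le_card himg'
        have h2 : (Y.erase (v M)).card = Y.card - 1 := Finset.card_erase_of_mem hvMY
        have h3 : 1 ≤ Y.card := hcard1
        omega
      have hsup' : ((Finset.Icc 1 b).filter (fun k => v' k ≠ v' b)).sup id ≤ N := by
        apply Finset.sup_le
        intro k hk
        have := (Finset.mem_Icc.1 (Finset.mem_filter.1 hk).1).2
        simp only [id]
        omega
      have hlt : measure' < μ := by
        calc measure' = ((Finset.Icc 1 b).image v').card * (N + 1)
              + ((Finset.Icc 1 b).filter (fun k => v' k ≠ v' b)).sup id := hmeas'def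
          _ ≤ ((Finset.Icc 1 b).image v').card * (N + 1) + N := by omega
          _ < (((Finset.Icc 1 b).image v').card + 1) * (N + 1) := by
              have : (((Finset.Icc 1 b).image v').card + 1) * (N + 1)
                  = ((Finset.Icc 1 b).image v').card * (N + 1) + (N + 1) := by ring
              omega
          _ ≤ Y.card * (N + 1) := Nat.mul_le_mul_right _ hcard'
          _ ≤ Y.card * (N + 1) + Dd.sup id := Nat.le_add_right _ _
          _ ≤ μ := hmeas
      obtain ⟨m', j', hj0, hjm, hstrict, hccond, hSig⟩ :=
        IH measure' hlt b v' (le_trans (le_of_lt hbM) hMN) hcls' le_rfl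
      have hj'mono := jmono hstrict
      -- construct the full sequence
      set jj : ℕ → ℕ := fun r => if r ≤ m' then j' r else M with hjjdef
      have hjjle : ∀ r, r ≤ m' → jj r = j' r := by
        intro r h; simp only [hjjdef]; rw [if_pos h]
      have hjjgt : ∀ r, m' < r → jj r = M := by
        intro r h; simp only [hjjdef]; rw [if_neg (by omega)]
      refine ⟨m' + 1, jj, by rw [hjjle 0 (Nat.zero_le _), hj0],
        by rw [hjjgt (m' + 1) (by omega)], ?_, ?_, ?_⟩
      · intro r hr
        rcases Nat.lt_or_ge r m' with h | h
        · rw [hjjle r (by omega), hjjle (r + 1) (by omega)]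
          exact hstrict r h
        · have hrm : r = m' := by omega
          rw [hrm, hjjle m' le_rfl, hjjgt (m' + 1) (by omega), hjm]
          exact hbM
      · intro r hr1 hr2
        rcases Nat.lt_or_ge r (m' + 1) with h | h
        · rw [hjjle r (by omega), hjjle (r - 1) (by omega)]
          exact hccond r hr1 (by omega)
        · have hrm : r = m' + 1 := by omega
          rw [hrm, hjjgt (m' + 1) (by omega)]
          have hb1M : b + 1 ∈ Finset.Icc 1 M := Finset.mem_Icc.2 ⟨by omega, by omega⟩
          have hvb1 : v (b + 1) = v M := htop (b + 1) (by omega) (by omega)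
          simp only [Nat.add_sub_cancel]
          rw [hjjle m' le_rfl, hjm]
          exact hcls M (b + 1) hMmem hb1M hvb1.symm
      · -- entropy
        have hmassIoc : ∑ k ∈ Finset.Ioc b M, w k = qA - x := by
          rw [hqA]; ring
        -- Hp w v M decomposition
        have hHpM : Hp w v M = eta qA + eta qB
            + ∑ y ∈ (Y.erase (v M)).erase (v b),
                eta (∑ k ∈ (Finset.Icc 1 M).filter (fun k => v k = y), w k) := by
          rw [Hp_superset w v M (Finset.Subset.refl _)]
          rw [sum_split_two hvMY hvbY hvb
            (fun y => eta (∑ k ∈ (Finset.Icc 1 M).filter (fun k => v k = y), w k))]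
        -- Hp w v' b decomposition
        have hvbY' : v b ∈ Y.erase (v M) := Finset.mem_erase.2 ⟨hvb, hvbY⟩
        have hmassb : ∑ k ∈ (Finset.Icc 1 b).filter (fun k => v' k = v b), w k = qB + x := by
          have key : ∑ k ∈ (Finset.Icc 1 b).filter (fun k => v' k = v b), w k
              = (∑ k ∈ (Finset.Icc 1 b).filter (fun k => v k = v b), w k)
              + ∑ k ∈ (Finset.Icc 1 b).filter (fun k => v k = v M), w k := by
            rw [Finset.sum_filter, Finset.sum_filter, Finset.sum_filter,
              ← Finset.sum_add_distrib]
            apply Finset.sum_congr rfl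
            intro k hk
            obtain ⟨hk1, hk2⟩ := Finset.mem_Icc.1 hk
            by_cases hkM : v k = v M
            · have h1 := hv'yes k hk1 hk2 hkM
              have h2 : ¬ (v k = v b) := by rw [hkM]; exact fun h => hvb h.symm
              have h3 : ¬ (v M = v b) := fun h => hvb h.symm
              simp [h1, h2, hkM, h3]
            · have h1 := hv'no k hkM
              by_cases hkb : v k = v b
              · simp [h1, hkb, hkM, hvb]
              · simp [h1, hkb, hkM, hvb]
          rw [key, hBb]
        have hrest : ∀ y ∈ (Y.erase (v M)).erase (v b),
            (Finset.Icc 1 b).filter (fun k => v' k = y)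
              = (Finset.Icc 1 M).filter (fun k => v k = y) := by
          intro y hy
          have hyvb : y ≠ v b := (Finset.mem_erase.1 hy).1
          have hyvM : y ≠ v M := (Finset.mem_erase.1 (Finset.mem_erase.1 hy).2).1
          ext k
          simp only [Finset.mem_filter, Finset.mem_Icc]
          constructor
          · rintro ⟨⟨h1, h2⟩, h3⟩
            by_cases hkM : v k = v M
            · rw [hv'yes k h1 h2 hkM] at h3
              exact absurd h3.symm hyvb
            · rw [hv'no k hkM] at h3
              exact ⟨⟨h1, by omega⟩, h3⟩
          · rintro ⟨⟨h1, h2⟩, h3⟩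
            have hkM : v k ≠ v M := by rw [h3]; exact hyvM
            have hkb : k ≤ b := hle k (Finset.mem_filter.2 ⟨Finset.mem_Icc.2 ⟨h1, h2⟩, hkM⟩)
            exact ⟨⟨h1, hkb⟩, by rw [hv'no k hkM]; exact h3⟩
        have hHpb : Hp w v' b = eta (qB + x)
            + ∑ y ∈ (Y.erase (v M)).erase (v b),
                eta (∑ k ∈ (Finset.Icc 1 M).filter (fun k => v k = y), w k) := by
          rw [Hp_superset w v' b himg']
          rw [← Finset.add_sum_erase _ _ hvbY']
          rw [hmassb]
          congr 1
          apply Finset.sum_congr rfl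
          intro y hy
          rw [hrest y hy]
        have htrans : eta (qA - x) + eta (qB + x) ≤ eta qA + eta qB := by
          rcases hOK with h | h
          · exact eta_transfer hx0 hxqA hqB0 h
          · have hAlowe : Alow = ∅ := by
              apply Finset.eq_empty_of_forall_notMem
              intro k hk
              have hkb := (Finset.mem_Icc.1 (Finset.mem_filter.1 hk).1).2
              have hkM := (Finset.mem_filter.1 hk).2
              have hk1 := (Finset.mem_Icc.1 (Finset.mem_filter.1 hk).1).1
              have : k ∈ A := Finset.mem_filter.2 ⟨Finset.mem_Icc.2 ⟨hk1, by omega⟩, hkM⟩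
              have := hAmin k this
              omega
            have hxz : x = 0 := by rw [hxdef, hAlowe]; simp
            rw [hxz]
            simp
        rw [Finset.sum_range_succ]
        have hsum_eq : ∑ r ∈ Finset.range m', eta (∑ k ∈ Finset.Ioc (jj r) (jj (r + 1)), w k)
            = ∑ r ∈ Finset.range m', eta (∑ k ∈ Finset.Ioc (j' r) (j' (r + 1)), w k) := by
          apply Finset.sum_congr rfl
          intro r hr
          have hr' := Finset.mem_range.1 hr
          rw [hjjle r (by omega), hjjle (r + 1) (by omega)]
        rw [hsum_eq, hjjle m' le_rfl, hjjgt (m' + 1) (by omega), hjm, hmassIoc]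
        calc (∑ r ∈ Finset.range m', eta (∑ k ∈ Finset.Ioc (j' r) (j' (r + 1)), w k))
              + eta (qA - x)
            ≤ Hp w v' b + eta (qA - x) := by linarith
          _ = eta (qB + x) + (∑ y ∈ (Y.erase (v M)).erase (v b),
                eta (∑ k ∈ (Finset.Icc 1 M).filter (fun k => v k = y), w k)) + eta (qA - x) := by
              rw [hHpb]
          _ ≤ eta qA + eta qB + ∑ y ∈ (Y.erase (v M)).erase (v b),
                eta (∑ k ∈ (Finset.Icc 1 M).filter (fun k => v k = y), w k) := by linarith
          _ = Hp w v M := hHpM.symm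
    · -- absorb path: move the high part of class (v b) into class (v M)
      push_neg at hOK
      obtain ⟨hq, hminAb⟩ := hOK
      set Y := (Finset.Icc 1 M).image v with hYdef
      have hvMY : v M ∈ Y := Finset.mem_image_of_mem v hMmem
      have hvbY : v b ∈ Y := Finset.mem_image_of_mem v hbIcc
      have hvMb : v M ≠ v b := fun h => hvb h.symm
      set v' : ℕ → ℕ := fun k => if minA ≤ k ∧ k ≤ M ∧ v k = v b then v M else v k with hv'def
      have hv'yes : ∀ k, minA ≤ k → k ≤ M → v k = v b → v' k = v M := by
        intro k h1 h2 h3; simp only [hv'def]; rw [if_pos ⟨h1, h2, h3⟩]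
      have hv'no : ∀ k, k ≤ M → ¬(minA ≤ k ∧ v k = v b) → v' k = v k := by
        intro k h hn; simp only [hv'def]; rw [if_neg (fun hctr => hn ⟨hctr.1, hctr.2.2⟩)]
      have hv'no2 : ∀ k, v k ≠ v b → v' k = v k := by
        intro k h; simp only [hv'def]; rw [if_neg (fun hctr => h hctr.2.2)]
      have hv'M : v' M = v M := hv'no2 M (fun h => hvb h.symm)
      have hqA0 : 0 ≤ qA := Finset.sum_nonneg fun k _ => hw k
      -- class condition for v'
      have hchain : ∀ k', k' ∈ Finset.Icc 1 M →
          (v k' = v M ∨ (minA ≤ k' ∧ v k' = v b)) → (ν M : ℝ) ≤ c * ν k' := by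
        intro k' hk' hcase
        rcases hcase with h | ⟨h1, h2⟩
        · exact hcls M k' hMmem hk' h.symm
        · have hA : (ν M : ℝ) ≤ c * ν minA :=
            hcls M minA hMmem (Finset.mem_filter.1 hminA).1 hvminA.symm
          have hmono : (ν minA : ℝ) ≤ ν k' :=
            Nat.cast_le.2 (hν minA k' hminA1 h1 (le_trans (Finset.mem_Icc.1 hk').2 hMN))
          have hc0 : (0:ℝ) ≤ c := by linarith
          calc (ν M : ℝ) ≤ c * ν minA := hA
            _ ≤ c * ν k' := by nlinarith
      have hcls' : ∀ k k', k ∈ Finset.Icc 1 M → k' ∈ Finset.Icc 1 M → v' k = v' k' →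
          (ν k : ℝ) ≤ c * ν k' := by
        intro k k' hk hk' heq
        obtain ⟨hk1, hk2⟩ := Finset.mem_Icc.1 hk
        obtain ⟨hk'1, hk'2⟩ := Finset.mem_Icc.1 hk'
        have hkM : (ν k : ℝ) ≤ ν M := Nat.cast_le.2 (hν k M hk1 hk2 hMN)
        by_cases h1 : minA ≤ k ∧ v k = v b <;> by_cases h2 : minA ≤ k' ∧ v k' = v b
        · exact le_trans hkM (hchain k' hk' (Or.inr h2))
        · rw [hv'yes k h1.1 hk2 h1.2, hv'no k' hk'2 h2] at heq
          exact le_trans hkM (hchain k' hk' (Or.inl heq.symm))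
        · rw [hv'no k hk2 h1, hv'yes k' h2.1 hk'2 h2.2] at heq
          exact le_trans hkM (hchain k' hk' (Or.inr h2))
        · rw [hv'no k hk2 h1, hv'no k' hk'2 h2] at heq
          exact hcls k k' hk hk' heq
      -- measure decreases
      have himg' : (Finset.Icc 1 M).image v' ⊆ Y := by
        intro y hy
        obtain ⟨k, hk, hvk⟩ := Finset.mem_image.1 hy
        obtain ⟨hk1, hk2⟩ := Finset.mem_Icc.1 hk
        by_cases h1 : minA ≤ k ∧ v k = v b
        · rw [hv'yes k h1.1 hk2 h1.2] at hvk
          rw [← hvk]; exact hvMY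
        · rw [hv'no k hk2 h1] at hvk
          rw [← hvk]; exact Finset.mem_image_of_mem v hk
      have hsupD : Dd.sup id = b := by
        apply le_antisymm
        · exact Finset.sup_le fun k hk => hle k hk
        · exact Finset.le_sup (f := id) hbD
      have hsup' : ((Finset.Icc 1 M).filter (fun k => v' k ≠ v' M)).sup id ≤ b - 1 := by
        apply Finset.sup_le
        intro k hk
        obtain ⟨hkI, hkne⟩ := Finset.mem_filter.1 hk
        obtain ⟨hk1, hk2⟩ := Finset.mem_Icc.1 hkI
        rw [hv'M] at hkne
        have hunch : ¬(minA ≤ k ∧ v k = v b) := by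
          intro hctr
          exact hkne (hv'yes k hctr.1 hk2 hctr.2)
        rw [hv'no k hk2 hunch] at hkne
        have hkd : k ∈ Dd := Finset.mem_filter.2 ⟨hkI, hkne⟩
        have hkb : k ≤ b := hle k hkd
        have hkneb : k ≠ b := by
          intro hctr
          subst hctr
          exact hunch ⟨hminAb, rfl⟩
        simp only [id]
        omega
      set measure' := ((Finset.Icc 1 M).image v').card * (N + 1)
        + ((Finset.Icc 1 M).filter (fun k => v' k ≠ v' M)).sup id with hmeas'def
      have hlt : measure' < μ := by
        have hcardle : ((Finset.Icc 1 M).image v').card * (N + 1) ≤ Y.card * (N + 1) :=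
          Nat.mul_le_mul_right _ (Finset.card_le_card himg')
        rw [hsupD] at hmeas
        omega
      obtain ⟨m', j', hj0, hjm, hstrict, hccond, hSig⟩ :=
        IH measure' hlt M v' hMN hcls' le_rfl
      -- entropy comparison
      have hHpM : Hp w v M = eta qA + eta qB
          + ∑ y ∈ (Y.erase (v M)).erase (v b),
              eta (∑ k ∈ (Finset.Icc 1 M).filter (fun k => v k = y), w k) := by
        rw [Hp_superset w v M (Finset.Subset.refl _)]
        rw [sum_split_two hvMY hvbY hvb
          (fun y => eta (∑ k ∈ (Finset.Icc 1 M).filter (fun k => v k = y), w k))]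
      set U := (Finset.Icc 1 M).filter (fun k => v k = v b ∧ minA ≤ k) with hUdef
      set y0 := ∑ k ∈ U, w k with hy0def
      set W := (Finset.Icc 1 M).filter (fun k => v k = v b ∧ ¬ minA ≤ k) with hWdef
      set qW := ∑ k ∈ W, w k with hqWdef
      have hy00 : 0 ≤ y0 := Finset.sum_nonneg fun k _ => hw k
      have hqW0 : 0 ≤ qW := Finset.sum_nonneg fun k _ => hw k
      have hqBsplit : qB = y0 + qW := by
        have h := Finset.sum_filter_add_sum_filter_not
          ((Finset.Icc 1 M).filter (fun k => v k = v b)) (fun k => minA ≤ k) w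
        rw [Finset.filter_filter, Finset.filter_filter] at h
        rw [hqBdef, hBdef, hy0def, hUdef, hqWdef, hWdef]
        exact h.symm
      have hmass'M : ∑ k ∈ (Finset.Icc 1 M).filter (fun k => v' k = v M), w k = qA + y0 := by
        have key : ∑ k ∈ (Finset.Icc 1 M).filter (fun k => v' k = v M), w k
            = (∑ k ∈ (Finset.Icc 1 M).filter (fun k => v k = v M), w k)
            + ∑ k ∈ (Finset.Icc 1 M).filter (fun k => v k = v b ∧ minA ≤ k), w k := by
          rw [Finset.sum_filter, Finset.sum_filter, Finset.sum_filter,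
            ← Finset.sum_add_distrib]
          apply Finset.sum_congr rfl
          intro k hk
          obtain ⟨hk1, hk2⟩ := Finset.mem_Icc.1 hk
          by_cases h1 : minA ≤ k ∧ v k = v b
          · have e1 := hv'yes k h1.1 hk2 h1.2
            have e2 : ¬ (v k = v M) := by rw [h1.2]; exact hvb
            simp [e1, e2, h1, hvb]
          · have e1 := hv'no k hk2 h1
            by_cases hkM : v k = v M
            · have e2 : ¬ (v k = v b ∧ minA ≤ k) := by
                rw [hkM]; exact fun hctr => hvb hctr.1.symm
              rw [e1, if_pos hkM, if_neg e2]
              ring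
            · have e2 : ¬ (v k = v b ∧ minA ≤ k) := fun hctr => h1 ⟨hctr.2, hctr.1⟩
              simp [e1, hkM, e2]
        rw [key, hqAdef, hAdef, hy0def, hUdef]
      have hmass'b : ∑ k ∈ (Finset.Icc 1 M).filter (fun k => v' k = v b), w k = qW := by
        rw [hqWdef, hWdef]
        congr 1
        ext k
        simp only [Finset.mem_filter, Finset.mem_Icc]
        constructor
        · rintro ⟨⟨h1, h2⟩, h3⟩
          by_cases hch : minA ≤ k ∧ v k = v b
          · rw [hv'yes k hch.1 h2 hch.2] at h3
            exact absurd h3 hvMb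
          · rw [hv'no k h2 hch] at h3
            exact ⟨⟨h1, h2⟩, h3, fun hm => hch ⟨hm, h3⟩⟩
        · rintro ⟨⟨h1, h2⟩, h3, h4⟩
          refine ⟨⟨h1, h2⟩, ?_⟩
          rw [hv'no k h2 (fun hctr => h4 hctr.1)]
          exact h3
      have hrest' : ∀ y ∈ (Y.erase (v M)).erase (v b),
          (Finset.Icc 1 M).filter (fun k => v' k = y)
            = (Finset.Icc 1 M).filter (fun k => v k = y) := by
        intro y hy
        have hyvb : y ≠ v b := (Finset.mem_erase.1 hy).1
        have hyvM : y ≠ v M := (Finset.mem_erase.1 (Finset.mem_erase.1 hy).2).1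
        ext k
        simp only [Finset.mem_filter, Finset.mem_Icc]
        constructor
        · rintro ⟨⟨h1, h2⟩, h3⟩
          by_cases hch : minA ≤ k ∧ v k = v b
          · rw [hv'yes k hch.1 h2 hch.2] at h3
            exact absurd h3.symm hyvM
          · rw [hv'no k h2 hch] at h3
            exact ⟨⟨h1, h2⟩, h3⟩
        · rintro ⟨⟨h1, h2⟩, h3⟩
          have hch : ¬(minA ≤ k ∧ v k = v b) := by
            rintro ⟨hm, hb'⟩
            exact hyvb (h3 ▸ hb' ▸ rfl : y = v b)
          exact ⟨⟨h1, h2⟩, by rw [hv'no k h2 hch]; exact h3⟩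
      have hHp'M : Hp w v' M = eta (qA + y0) + eta qW
          + ∑ y ∈ (Y.erase (v M)).erase (v b),
              eta (∑ k ∈ (Finset.Icc 1 M).filter (fun k => v k = y), w k) := by
        rw [Hp_superset w v' M himg']
        rw [sum_split_two hvMY hvbY hvb
          (fun y => eta (∑ k ∈ (Finset.Icc 1 M).filter (fun k => v' k = y), w k))]
        rw [hmass'M, hmass'b]
        congr 1
        apply Finset.sum_congr rfl
        intro y hy
        rw [hrest' y hy]
      have htrans : eta (qA + y0) + eta qW ≤ eta qA + eta qB := by
        have hqWeq : qW = qB - y0 := by linarith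
        have hy0B : y0 ≤ qB := by linarith
        have hqBA : qB ≤ qA + y0 := by linarith
        have := eta_transfer hy00 hy0B hqA0 hqBA
        rw [hqWeq]
        linarith
      refine ⟨m', j', hj0, hjm, hstrict, hccond, le_trans hSig ?_⟩
      rw [hHp'M, hHpM]
      linarith


/-- enumerating `S` by nondecreasing size via `σ : {1,…,N} → S`, every valid
deterministic padding scheme `f` is dominated by a "blockwise" scheme `g` determined by
cut points `0 = j₀ < j₁ < ⋯ < j_m = N` with `n(σ(j_r)) ≤ c·n(σ(j_{r-1}+1))`, which pads
every object in block `r` to `n(σ(j_r))`; `g` is valid and `H(g) ≤ H(f)`. -/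
theorem stmt_4 {S : Type*} [Fintype S] [DecidableEq S] [Nonempty S]
    (n : S → ℕ) (hn : ∀ s, 1 ≤ n s)
    (p : S → ℝ) (hp : ∀ s, 0 < p s) (hsum : ∑ s, p s = 1)
    (c : ℝ) (hc : 1 ≤ c)
    (σ : ℕ → S) (hσ : Set.BijOn σ (Set.Icc 1 (Fintype.card S)) Set.univ)
    (hσmono : ∀ k, 1 ≤ k → k < Fintype.card S → n (σ k) ≤ n (σ (k + 1)))
    (f : S → ℕ) (hf : ValidDet n c f) :
    ∃ (m : ℕ) (j : ℕ → ℕ), 1 ≤ m ∧ j 0 = 0 ∧ j m = Fintype.card S ∧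
      (∀ r < m, j r < j (r + 1)) ∧
      (∀ r, 1 ≤ r → r ≤ m → (n (σ (j r)) : ℝ) ≤ c * (n (σ (j (r - 1) + 1)) : ℝ)) ∧
      ∃ g : S → ℕ,
        (∀ r, 1 ≤ r → r ≤ m → ∀ k, j (r - 1) < k → k ≤ j r → g (σ k) = n (σ (j r))) ∧
        ValidDet n c g ∧ Hent p g ≤ Hent p f := by
  classical
  set N := Fintype.card S with hNdef
  have hN : 1 ≤ N := Fintype.card_pos
  set ν : ℕ → ℕ := fun k => n (σ k) with hνdef
  set w : ℕ → ℝ := fun k => p (σ k) with hwdef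
  set v : ℕ → ℕ := fun k => f (σ k) with hvdef
  have hνmono : ∀ i j, 1 ≤ i → i ≤ j → j ≤ N → ν i ≤ ν j := by
    intro i j h1 h2 h3
    induction j with
    | zero => omega
    | succ jj ih =>
      rcases Nat.lt_or_ge i (jj + 1) with h | h
      · have hi : ν i ≤ ν jj := ih (by omega) (by omega)
        have : ν jj ≤ ν (jj + 1) := hσmono jj (by omega) (by omega)
        omega
      · have : i = jj + 1 := by omega
        rw [this]
  have hw0 : ∀ k, 0 ≤ w k := fun k => (hp _).le
  have hcls : ∀ k k', k ∈ Finset.Icc 1 N → k' ∈ Finset.Icc 1 N → v k = v k' →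
      (ν k : ℝ) ≤ c * ν k' := by
    intro k k' _ _ heq
    have h1 : (ν k : ℝ) ≤ (f (σ k) : ℝ) := Nat.cast_le.2 (hf (σ k)).1
    have h2 : (f (σ k') : ℝ) ≤ c * ν k' := (hf (σ k')).2
    have heq' : f (σ k) = f (σ k') := heq
    rw [heq'] at h1
    linarith
  obtain ⟨m, j, hj0, hjm, hstrict, hccond, hSig⟩ :=
    core N ν w c hνmono hw0 hc
      (((Finset.Icc 1 N).image v).card * (N + 1)
        + ((Finset.Icc 1 N).filter (fun k => v k ≠ v N)).sup id)
      N v le_rfl hcls le_rfl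
  have hm1 : 1 ≤ m := by
    by_contra h
    have hm0 : m = 0 := by omega
    rw [hm0, hj0] at hjm
    omega
  have hjmono := jmono hstrict
  -- inverse of σ
  have hsur : ∀ s : S, ∃ k, (1 ≤ k ∧ k ≤ N) ∧ σ k = s := by
    intro s
    obtain ⟨k, hk, he⟩ := hσ.surjOn (Set.mem_univ s)
    exact ⟨k, Set.mem_Icc.1 hk, he⟩
  choose τ hτ1 hτ2 using hsur
  have hτσ : ∀ k, 1 ≤ k → k ≤ N → τ (σ k) = k := by
    intro k h1 h2
    apply hσ.injOn (Set.mem_Icc.2 (hτ1 (σ k))) (Set.mem_Icc.2 ⟨h1, h2⟩)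
    exact hτ2 (σ k)
  -- block index function
  have hex : ∀ k : ℕ, ∃ t, k ≤ j (t + 1) ∨ m ≤ t := fun k => ⟨m, Or.inr le_rfl⟩
  set blk : ℕ → ℕ := fun k => Nat.find (hex k) with hblkdef
  have hblk_eq : ∀ r0, r0 < m → ∀ k, j r0 < k → k ≤ j (r0 + 1) → blk k = r0 := by
    intro r0 hr0 k hk1 hk2
    simp only [hblkdef]
    rw [Nat.find_eq_iff]
    refine ⟨Or.inl hk2, ?_⟩
    intro t ht
    rintro (h | h)
    · have := hjmono (t + 1) r0 (by omega) (by omega)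
      omega
    · omega
  have hblk_lt : ∀ k, 1 ≤ k → k ≤ N → blk k < m ∧ j (blk k) < k ∧ k ≤ j (blk k + 1) := by
    intro k h1 h2
    have hPm1 : k ≤ j ((m - 1) + 1) ∨ m ≤ m - 1 := by
      left
      have he : (m - 1) + 1 = m := by omega
      rw [he, hjm]
      exact h2
    have hfle : blk k ≤ m - 1 := Nat.find_le hPm1
    have hlt : blk k < m := by omega
    have hspec : k ≤ j (blk k + 1) ∨ m ≤ blk k := Nat.find_spec (hex k)
    have hup : k ≤ j (blk k + 1) := by
      rcases hspec with h | h
      · exact h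
      · omega
    refine ⟨hlt, ?_, hup⟩
    rcases Nat.eq_zero_or_pos (blk k) with h0 | hpos
    · rw [h0, hj0]; omega
    · have hmin : ¬(k ≤ j ((blk k - 1) + 1) ∨ m ≤ blk k - 1) :=
        Nat.find_min (hex k) (show blk k - 1 < blk k by omega)
      rw [not_or] at hmin
      obtain ⟨hm1', hm2'⟩ := hmin
      have he : (blk k - 1) + 1 = blk k := by omega
      rw [he] at hm1'
      omega
  set g : S → ℕ := fun s => n (σ (j (blk (τ s) + 1))) with hgdef
  have hgσ : ∀ k, 1 ≤ k → k ≤ N → g (σ k) = ν (j (blk k + 1)) := by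
    intro k h1 h2
    simp only [hgdef, hτσ k h1 h2, hνdef]
  refine ⟨m, j, hm1, hj0, hjm, hstrict, hccond, g, ?_, ?_, ?_⟩
  · -- block property
    intro r hr1 hr2 k hk1 hk2
    have hkN : k ≤ N := le_trans hk2 (by rw [← hjm]; exact hjmono r m hr2 le_rfl)
    have hk1' : 1 ≤ k := by omega
    rw [hgσ k hk1' hkN]
    have hr1' : (r - 1) + 1 = r := by omega
    have hbe : blk k = r - 1 := hblk_eq (r - 1) (by omega) k hk1 (by rwa [hr1'])
    rw [hbe, hr1']
  · -- validity
    have key : ∀ k, 1 ≤ k → k ≤ N → n (σ k) ≤ g (σ k) ∧ (g (σ k) : ℝ) ≤ c * n (σ k) := by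
      intro k h1 h2
      obtain ⟨hblt, hjlt, hjge⟩ := hblk_lt k h1 h2
      rw [hgσ k h1 h2]
      have hjN : j (blk k + 1) ≤ N := by rw [← hjm]; exact hjmono (blk k + 1) m (by omega) le_rfl
      constructor
      · exact hνmono k (j (blk k + 1)) h1 hjge hjN
      · have hcc := hccond (blk k + 1) (by omega) (by omega)
        simp only [Nat.add_sub_cancel] at hcc
        have hmono2 : (ν (j (blk k) + 1) : ℝ) ≤ ν k :=
          Nat.cast_le.2 (hνmono (j (blk k) + 1) k (by omega) (by omega) h2)
        have hc0 : (0 : ℝ) ≤ c := by linarith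
        calc (ν (j (blk k + 1)) : ℝ) ≤ c * ν (j (blk k) + 1) := hcc
          _ ≤ c * ν k := by nlinarith
    intro s
    have h := key (τ s) (hτ1 s).1 (hτ1 s).2
    rw [hτ2 s] at h
    exact h
  · -- entropy
    have htrans : ∀ h : S → ℕ, Hent p h = Hp w (fun k => h (σ k)) N := by
      intro h
      unfold Hent Hp
      have himg : Finset.univ.image h = (Finset.Icc 1 N).image (fun k => h (σ k)) := by
        ext y
        simp only [Finset.mem_image, Finset.mem_univ, true_and, Finset.mem_Icc]
        constructor
        · rintro ⟨s, hs⟩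
          exact ⟨τ s, ⟨(hτ1 s).1, (hτ1 s).2⟩, by rw [hτ2 s]; exact hs⟩
        · rintro ⟨k, _, he⟩
          exact ⟨σ k, he⟩
      rw [← himg]
      apply Finset.sum_congr rfl
      intro y _
      congr 1
      apply Finset.sum_bij' (i := fun s _ => τ s) (j := fun k _ => σ k)
      · intro a ha
        simp only [Finset.mem_filter, Finset.mem_Icc]
        refine ⟨⟨(hτ1 a).1, (hτ1 a).2⟩, ?_⟩
        rw [hτ2 a]
        exact (Finset.mem_filter.1 ha).2
      · intro a ha
        simp only [Finset.mem_filter, Finset.mem_univ, true_and]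
        exact (Finset.mem_filter.1 ha).2
      · intro a _
        exact hτ2 a
      · intro a ha
        obtain ⟨hk, _⟩ := Finset.mem_filter.1 ha
        obtain ⟨h1, h2⟩ := Finset.mem_Icc.1 hk
        exact hτσ a h1 h2
      · intro a _
        rw [hwdef]
        simp only
        rw [hτ2 a]
    have hGblock : ∀ r0, r0 < m → ∀ k, k ∈ Finset.Ioc (j r0) (j (r0 + 1)) →
        g (σ k) = ν (j (r0 + 1)) := by
      intro r0 hr0 k hk
      obtain ⟨hk1, hk2⟩ := Finset.mem_Ioc.1 hk
      have hk1' : 1 ≤ k := by omega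
      have hkN : k ≤ N := le_trans hk2 (by rw [← hjm]; exact hjmono (r0 + 1) m (by omega) le_rfl)
      rw [hgσ k hk1' hkN, hblk_eq r0 hr0 k hk1 hk2]
    have hIccIoc : Finset.Icc 1 N = Finset.Ioc (j 0) (j m) := by
      rw [hj0, hjm]
      ext k
      simp only [Finset.mem_Icc, Finset.mem_Ioc]
      omega
    set val : ℕ → ℕ := fun r0 => ν (j (r0 + 1)) with hvaldef
    have himg2 : (Finset.Icc 1 N).image (fun k => g (σ k)) = (Finset.range m).image val := by
      ext y
      simp only [Finset.mem_image, Finset.mem_Icc, Finset.mem_range]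
      constructor
      · rintro ⟨k, ⟨h1, h2⟩, he⟩
        obtain ⟨hblt, hjlt, hjge⟩ := hblk_lt k h1 h2
        refine ⟨blk k, hblt, ?_⟩
        rw [hvaldef]
        simp only
        rw [← hgσ k h1 h2]
        exact he
      · rintro ⟨r0, hr0, he⟩
        have hj1 : 1 ≤ j (r0 + 1) := by
          have := hstrict r0 hr0
          omega
        have hjN : j (r0 + 1) ≤ N := by
          rw [← hjm]; exact hjmono (r0 + 1) m (by omega) le_rfl
        refine ⟨j (r0 + 1), ⟨hj1, hjN⟩, ?_⟩
        rw [hGblock r0 hr0 (j (r0 + 1)) (Finset.mem_Ioc.2 ⟨hstrict r0 hr0, le_rfl⟩)]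
        exact he
    have hmass2 : ∀ y, ∑ k ∈ (Finset.Icc 1 N).filter (fun k => g (σ k) = y), w k
        = ∑ r ∈ (Finset.range m).filter (fun r => val r = y),
            ∑ k ∈ Finset.Ioc (j r) (j (r + 1)), w k := by
      intro y
      rw [Finset.sum_filter, Finset.sum_filter, hIccIoc,
        ← sum_blocks m j hjmono (fun k => if g (σ k) = y then w k else 0)]
      apply Finset.sum_congr rfl
      intro r hr
      have hr' := Finset.mem_range.1 hr
      by_cases hy : val r = y
      · rw [if_pos hy]
        apply Finset.sum_congr rfl
        intro k hk
        rw [if_pos ((hGblock r hr' k hk).trans hy)]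
      · rw [if_neg hy]
        apply Finset.sum_eq_zero
        intro k hk
        rw [if_neg (by rw [hGblock r hr' k hk]; exact hy)]
    calc Hent p g = Hp w (fun k => g (σ k)) N := htrans g
      _ = ∑ y ∈ (Finset.range m).image val,
            eta (∑ r ∈ (Finset.range m).filter (fun r => val r = y),
              ∑ k ∈ Finset.Ioc (j r) (j (r + 1)), w k) := by
          unfold Hp
          rw [himg2]
          apply Finset.sum_congr rfl
          intro y _
          rw [hmass2 y]
      _ ≤ ∑ r ∈ Finset.range m, eta (∑ k ∈ Finset.Ioc (j r) (j (r + 1)), w k) :=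
          sum_eta_image_le (Finset.range m) val _
            (fun r _ => Finset.sum_nonneg fun k _ => hw0 k)
      _ ≤ Hp w v N := hSig
      _ = Hent p f := (htrans f).symm
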